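/- Let T₁, T₂ be polynomials and let y, ỹ be polynomials satisfying the discrete Wronskian equation Wr⁺(y,ỹ)(x) := y(x)ỹ(x+h) − ỹ(x)y(x+h) = T₁(x)/T₂(x) (assumed a polynomial). Then the two rational functions E(x) = T₁(x)y(x+h)/(T₁(x+h)y(x)) + T₂(x)y(x−h)/(T₂(x+h)y(x)) and Ẽ(x) = T₁(x)ỹ(x+h)/(T₁(x+h)ỹ(x)) + T₂(x)ỹ(x−h)/(T₂(x+h)ỹ(x)) are equal. -/

import Mathlib

/-!
Writing `W = y·ỹ(x+h) − ỹ·y(x+h)` for the Wronskian and `W(x−h)` for its shift, the hypothesis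
gives `T₁(x)/T₁(x−h) = (T₂(x)/T₂(x−h)) · W/W(x−h)`, and the identity
`W·y(x−h) + W(x−h)·y(x+h) = y·(y(x−h)ỹ(x+h) − ỹ(x−h)y(x+h))` collapses `E` to
`(T₂(x)/T₂(x−h)) · (y(x−h)ỹ(x+h) − ỹ(x−h)y(x+h)) / W(x−h)`.
Exchanging `y` and `ỹ` negates both numerator and denominator of the last factor, so `E = Ẽ`.
-/

open Polynomial

noncomputable def rf (p : Polynomial ℂ) : RatFunc ℂ := algebraMap (Polynomial ℂ) (RatFunc ℂ) p

theorem Polynomial.comp_X_add_C_comp_X_sub_C {R : Type*} [CommRing R] (p : R[X]) (t : R) :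
    (p.comp (X + C t)).comp (X - C t) = p := by
  simp [comp_assoc]

theorem rf_ne_zero {p : Polynomial ℂ} (hp : p ≠ 0) : rf p ≠ 0 :=
  (map_ne_zero_iff _ (RatFunc.algebraMap_injective ℂ)).mpr hp

section Field

variable {K : Type*} [Field K]

/-- `Wr⁺` evaluated from the values `a, b` of `y, ỹ` at one point and `aₚ, bₚ` at the next. -/
def discreteWronskian (a aₚ b bₚ : K) : K := a * bₚ - b * aₚ

theorem discreteWronskian_swap (a aₚ b bₚ : K) :
    discreteWronskian b bₚ a aₚ = -discreteWronskian a aₚ b bₚ := by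
  unfold discreteWronskian; ring

/-- `E` with `a, aₚ, aₘ` the values of `y` at `x, x + h, x - h`, and `t₁ₘ, t₂ₘ` those of
`T₁, T₂` at `x - h`. -/
def gl2Eigenvalue (t₁ t₁ₘ t₂ t₂ₘ a aₚ aₘ : K) : K :=
  t₁ * aₘ / (t₁ₘ * a) + t₂ * aₚ / (t₂ₘ * a)

variable {t₁ t₁ₘ t₂ t₂ₘ a aₚ aₘ b bₚ bₘ : K}

theorem gl2Eigenvalue_eq_div_wronskian (ha : a ≠ 0) (hWₘ : discreteWronskian aₘ a bₘ b ≠ 0)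
    (hT : t₁ / t₁ₘ = t₂ / t₂ₘ * (discreteWronskian a aₚ b bₚ / discreteWronskian aₘ a bₘ b)) :
    gl2Eigenvalue t₁ t₁ₘ t₂ t₂ₘ a aₚ aₘ
      = t₂ / t₂ₘ * (discreteWronskian aₘ aₚ bₘ bₚ / discreteWronskian aₘ a bₘ b) := by
  rw [gl2Eigenvalue, mul_div_mul_comm, mul_div_mul_comm, hT, mul_assoc, ← mul_add]
  congr 1
  have key : discreteWronskian a aₚ b bₚ * aₘ + discreteWronskian aₘ a bₘ b * aₚ
      = a * discreteWronskian aₘ aₚ bₘ bₚ := by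
    unfold discreteWronskian; ring
  field_simp
  linear_combination key

theorem gl2Eigenvalue_eq_of_wronskian (ha : a ≠ 0) (hb : b ≠ 0)
    (hWₘ : discreteWronskian aₘ a bₘ b ≠ 0)
    (hT : t₁ / t₁ₘ = t₂ / t₂ₘ * (discreteWronskian a aₚ b bₚ / discreteWronskian aₘ a bₘ b)) :
    gl2Eigenvalue t₁ t₁ₘ t₂ t₂ₘ a aₚ aₘ = gl2Eigenvalue t₁ t₁ₘ t₂ t₂ₘ b bₚ bₘ := by
  have hT' : t₁ / t₁ₘ
      = t₂ / t₂ₘ * (discreteWronskian b bₚ a aₚ / discreteWronskian bₘ b aₘ a) := by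
    rwa [discreteWronskian_swap, discreteWronskian_swap aₘ, neg_div_neg_eq]
  rw [gl2Eigenvalue_eq_div_wronskian ha hWₘ hT,
    gl2Eigenvalue_eq_div_wronskian hb (by rwa [discreteWronskian_swap, neg_ne_zero]) hT',
    discreteWronskian_swap aₘ aₚ, discreteWronskian_swap aₘ a, neg_div_neg_eq]

end Field

theorem gl2_eigenvalue_invariance_general (h : ℂ)
    (T1 T2 y yt : Polynomial ℂ) (hT1 : T1 ≠ 0)
    (hy : y ≠ 0) (hyt : yt ≠ 0)
    (hwr : (y * yt.comp (Polynomial.X + Polynomial.C h)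
            - yt * y.comp (Polynomial.X + Polynomial.C h)) * T2 = T1) :
    rf T1 * rf (y.comp (Polynomial.X - Polynomial.C h)) /
        (rf (T1.comp (Polynomial.X - Polynomial.C h)) * rf y)
      + rf T2 * rf (y.comp (Polynomial.X + Polynomial.C h)) /
        (rf (T2.comp (Polynomial.X - Polynomial.C h)) * rf y)
    = rf T1 * rf (yt.comp (Polynomial.X - Polynomial.C h)) /
        (rf (T1.comp (Polynomial.X - Polynomial.C h)) * rf yt)
      + rf T2 * rf (yt.comp (Polynomial.X + Polynomial.C h)) /
        (rf (T2.comp (Polynomial.X - Polynomial.C h)) * rf yt) := by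
  have hwrₘ : (y.comp (X - C h) * yt - yt.comp (X - C h) * y) * T2.comp (X - C h)
      = T1.comp (X - C h) := by
    have := congrArg (·.comp (X - C h)) hwr
    simpa only [mul_comp, sub_comp, comp_X_add_C_comp_X_sub_C] using this
  have hT1ₘ : T1.comp (X - C h) ≠ 0 := by
    simpa [sub_eq_add_neg] using (comp_X_add_C_ne_zero_iff (t := -h)).mpr hT1
  refine gl2Eigenvalue_eq_of_wronskian (rf_ne_zero hy) (rf_ne_zero hyt) ?_ ?_
  · have hWₘ := rf_ne_zero (left_ne_zero_of_mul (hwrₘ ▸ hT1ₘ))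
    simpa only [rf, discreteWronskian, map_mul, map_sub] using hWₘ
  · rw [← hwrₘ, ← hwr]
    simp only [rf, discreteWronskian, map_mul, map_sub]
    rw [mul_div_mul_comm, mul_comm]

/-- if Wr⁺(y,ỹ)(x) = y(x)ỹ(x+h) − ỹ(x)y(x+h) = T₁/T₂ (a polynomial),
then the gl₂ transfer-matrix eigenvalue expressions
E = T₁·y[1]/(T₁[1]·y) + T₂·y[−1]/(T₂[1]·y) attached to y and to ỹ coincide as
rational functions.  Here f[1](x) = f(x−h) is comp (X − C h) and f[−1](x) = f(x+h)
is comp (X + C h). -/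
theorem gl2_eigenvalue_invariance (h : ℂ) (hh : h ≠ 0)
    (T1 T2 y yt : Polynomial ℂ) (hT1 : T1 ≠ 0) (hT2 : T2 ≠ 0)
    (hy : y ≠ 0) (hyt : yt ≠ 0)
    (hwr : (y * yt.comp (Polynomial.X + Polynomial.C h)
            - yt * y.comp (Polynomial.X + Polynomial.C h)) * T2 = T1) :
    rf T1 * rf (y.comp (Polynomial.X - Polynomial.C h)) /
        (rf (T1.comp (Polynomial.X - Polynomial.C h)) * rf y)
      + rf T2 * rf (y.comp (Polynomial.X + Polynomial.C h)) /
        (rf (T2.comp (Polynomial.X - Polynomial.C h)) * rf y)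
    = rf T1 * rf (yt.comp (Polynomial.X - Polynomial.C h)) /
        (rf (T1.comp (Polynomial.X - Polynomial.C h)) * rf yt)
      + rf T2 * rf (yt.comp (Polynomial.X + Polynomial.C h)) /
        (rf (T2.comp (Polynomial.X - Polynomial.C h)) * rf yt) :=
  gl2_eigenvalue_invariance_general h T1 T2 y yt hT1 hy hyt hwr
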